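/- arXiv:0906.1672 — 2 statements merged into one kernel-verified Lean document; each statement's English description precedes it below -/
import Mathlib

section
/- The number of 2-Stirling permutations of size n equals the double factorial (2n-1)!! = 1·3·5···(2n-1). -/
/-- A `k`-Stirling permutation of size `n`, encoded as a word (list) over `{1,…,n}`. -/
def IsStirlingWord (k n : ℕ) (w : List ℕ) : Prop :=
  w.length = k * n ∧
  (∀ i, 1 ≤ i → i ≤ n → w.count i = k) ∧
  (∀ p q r, p < q → q < r → r < w.length →
    w.getD p 0 = w.getD r 0 → w.getD p 0 ≤ w.getD q 0)

/-!
The Stirling condition says that the word avoids the pattern `212`: it has no subsequence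
`x y x` with `y < x`. In a Stirling word of size `n + 1` the two copies of the largest letter
must therefore be adjacent, since every letter between them would be smaller. Deleting this
pair gives a Stirling word of size `n`; conversely the pair can be inserted into any of the
`2n + 1` gaps of a Stirling word of size `n`. So the count is multiplied by `2n + 1` at each step.
-/

namespace List

variable {α : Type*}

def Avoids212 [LE α] (w : List α) : Prop :=
  ∀ x y, [x, y, x] <+ w → x ≤ y

theorem avoids212_iff_getD [LE α] (w : List α) (d : α) :
    w.Avoids212 ↔ ∀ p q r, p < q → q < r → r < w.length →
      w.getD p d = w.getD r d → w.getD p d ≤ w.getD q d := by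
  constructor
  · intro hw p q r hpq hqr hr hpr
    have hsub := map_getElem_sublist (l := w)
      (is := [⟨p, by omega⟩, ⟨q, by omega⟩, ⟨r, hr⟩]) (by simp [hpq, hqr, hpq.trans hqr])
    simp only [map_cons, map_nil, Fin.getElem_fin] at hsub
    simp only [getD_eq_getElem _ _ (show p < w.length by omega),
      getD_eq_getElem _ _ (show q < w.length by omega), getD_eq_getElem _ _ hr] at hpr ⊢
    exact hw _ _ (hpr ▸ hsub)
  · intro hw x y hsub
    obtain ⟨is, his, hlt⟩ := sublist_eq_map_getElem hsub
    rcases is with _ | ⟨p, _ | ⟨q, _ | ⟨r, _ | _⟩⟩⟩ <;>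
      simp only [map_cons, map_nil, cons.injEq, reduceCtorEq, and_false] at his
    obtain ⟨rfl, rfl, hpr, -⟩ := his
    simp only [pairwise_cons, mem_cons, not_mem_nil] at hlt
    have hpr' : w.getD p d = w.getD r d := by simpa [getD_eq_getElem] using hpr
    simpa [getD_eq_getElem] using hw p q r (hlt.1 q (by simp)) (hlt.2.1 r (by simp)) r.2 hpr'

theorem Avoids212.sublist [LE α] {l₁ l₂ : List α} (h : l₁ <+ l₂) (hw : l₂.Avoids212) :
    l₁.Avoids212 :=
  fun x y hsub => hw x y (hsub.trans h)

theorem forall_mem_of_sum_count_eq_length [DecidableEq α] {l : List α} {s : Finset α}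
    (h : ∑ a ∈ s, l.count a = l.length) : ∀ a ∈ l, a ∈ s := by
  have hsum : ∑ a ∈ l.toFinset with a ∈ s, l.count a = ∑ a ∈ s, l.count a :=
    Finset.sum_subset (fun a ha => (Finset.mem_filter.1 ha).2) fun a has ha =>
      count_eq_zero.2 fun hal => ha (Finset.mem_filter.2 ⟨mem_toFinset.2 hal, has⟩)
  rw [Finset.sum_filter_count_eq_countP, h, countP_eq_length] at hsum
  simpa using hsum

theorem sublist_append_of_sublist_append_cons_cons [DecidableEq α] {l a c : List α} {m : α}
    (hm : m ∉ l) (h : l <+ a ++ m :: m :: c) : l <+ a ++ c := by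
  have hfilter := h.filter (· != m)
  rw [filter_eq_self.2 (by simpa using fun x hx (hxm : x = m) => hm (hxm ▸ hx))] at hfilter
  simp only [filter_append, filter_cons, bne_self_eq_false, Bool.false_eq_true,
    if_false] at hfilter
  exact hfilter.trans (filter_sublist.append filter_sublist)

theorem eq_of_sublist_append_cons_cons {a c : List α} {m y : α} (ha : m ∉ a) (hc : m ∉ c)
    (h : [m, y, m] <+ a ++ m :: m :: c) : y = m := by
  obtain ⟨_ | ⟨z, l₁⟩, l₂, hl, ha', hc'⟩ := sublist_append_iff.1 h
  · rw [nil_append] at hl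
    subst hl
    have hnot : ∀ l, m ∈ l → ¬ l <+ c := fun l hl hlc => hc (hlc.subset hl)
    simp [sublist_cons_iff, hnot] at hc'
  · obtain ⟨rfl, -⟩ := cons.inj hl
    exact absurd (ha'.subset mem_cons_self) ha

theorem Avoids212.append_cons_cons [LinearOrder α] {a c : List α} {m : α}
    (hw : (a ++ c).Avoids212) (hlt : ∀ x ∈ a ++ c, x < m) : (a ++ m :: m :: c).Avoids212 := by
  intro x y hsub
  by_cases hxm : x = m
  · subst x
    exact (eq_of_sublist_append_cons_cons (fun hm => (hlt m (by simp [hm])).false)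
      (fun hm => (hlt m (by simp [hm])).false) hsub).ge
  by_cases hym : y = m
  · subst y
    have hx : x ∈ a ++ m :: m :: c := hsub.subset (by simp)
    simp only [mem_append, mem_cons, hxm, false_or] at hx
    exact (hlt x (mem_append.2 hx)).le
  have hm : m ∉ [x, y, x] := by simp [Ne.symm hxm, Ne.symm hym]
  exact hw x y (sublist_append_of_sublist_append_cons_cons hm hsub)

theorem Avoids212.exists_eq_append_cons_cons [LinearOrder α] {w : List α} {m : α}
    (hw : w.Avoids212) (hle : ∀ x ∈ w, x ≤ m) (hcount : w.count m = 2) :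
    ∃ a c, w = a ++ m :: m :: c := by
  obtain ⟨r₁, r₂, rfl, hr₁, hr₂⟩ :=
    cons_sublist_iff.1 (duplicate_iff_sublist.1 (duplicate_iff_two_le_count.2 hcount.ge))
  obtain ⟨a, b₁, rfl⟩ := append_of_mem hr₁
  obtain ⟨b₂, c, rfl⟩ := append_of_mem (singleton_sublist.1 hr₂)
  rw [show a ++ m :: b₁ ++ (b₂ ++ m :: c) = a ++ m :: (b₁ ++ b₂ ++ m :: c) by simp] at *
  generalize b₁ ++ b₂ = b at hw hle hcount
  have hb : ∀ y ∈ b, y = m := fun y hy => le_antisymm (hle y (by simp [hy])) <|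
    hw m y <| sublist_append_of_sublist_right <| cons_sublist_cons.2 <|
      (singleton_sublist.2 hy).append (singleton_sublist.2 mem_cons_self)
  have hbm : b.count m = 0 := by
    simp only [count_append, count_cons_self] at hcount
    omega
  obtain rfl : b = [] :=
    eq_nil_iff_forall_not_mem.2 fun y hy => count_eq_zero.1 hbm (hb y hy ▸ hy)
  exact ⟨a, c, rfl⟩

def insertPair (j : ℕ) (m : α) (w : List α) : List α :=
  w.take j ++ m :: m :: w.drop j

theorem count_insertPair [DecidableEq α] (j : ℕ) (m x : α) (w : List α) :
    (w.insertPair j m).count x = w.count x + if x = m then 2 else 0 := by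
  have hsplit := congrArg (count x) (take_append_drop j w)
  rw [count_append] at hsplit
  by_cases hx : x = m
  · subst hx
    simp only [insertPair, count_append, count_cons_self, if_pos]
    omega
  · simp [insertPair, count_append, hx, Ne.symm hx, hsplit]

theorem insertPair_inj [DecidableEq α] {j₁ j₂ : ℕ} {m : α} {w₁ w₂ : List α}
    (hm₁ : m ∉ w₁) (hm₂ : m ∉ w₂) (hj₁ : j₁ ≤ w₁.length) (hj₂ : j₂ ≤ w₂.length)
    (h : w₁.insertPair j₁ m = w₂.insertPair j₂ m) : j₁ = j₂ ∧ w₁ = w₂ := by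
  have hidx (j : ℕ) (w : List α) (hm : m ∉ w) (hj : j ≤ w.length) :
      (w.insertPair j m).idxOf m = j := by
    rw [insertPair, idxOf_append_of_notMem fun hmt => hm (mem_of_mem_take hmt)]
    simp [hj]
  obtain rfl : j₁ = j₂ := by rw [← hidx j₁ w₁ hm₁ hj₁, h, hidx j₂ w₂ hm₂ hj₂]
  obtain ⟨htake, hdrop⟩ := append_inj h (by simp; omega)
  refine ⟨rfl, ?_⟩
  rw [← take_append_drop j₁ w₁, htake, (cons.inj (cons.inj hdrop).2).2, take_append_drop]

end List

section

variable {k n : ℕ} {w : List ℕ}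

theorem isStirlingWord_iff :
    IsStirlingWord k n w ↔
      w.length = k * n ∧ (∀ i, 1 ≤ i → i ≤ n → w.count i = k) ∧ w.Avoids212 := by
  rw [IsStirlingWord, List.avoids212_iff_getD w 0]

namespace IsStirlingWord

theorem le_of_mem (hw : IsStirlingWord k n w) {x : ℕ} (hx : x ∈ w) : x ≤ n := by
  suffices h : ∑ i ∈ Finset.Icc 1 n, w.count i = w.length from
    (Finset.mem_Icc.1 (List.forall_mem_of_sum_count_eq_length h x hx)).2
  rw [Finset.sum_congr rfl fun i hi => hw.2.1 i (Finset.mem_Icc.1 hi).1 (Finset.mem_Icc.1 hi).2,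
    Finset.sum_const, Nat.card_Icc, hw.1, smul_eq_mul, Nat.add_sub_cancel, mul_comm]

theorem succ_notMem (hw : IsStirlingWord k n w) : n + 1 ∉ w :=
  fun h => Nat.not_succ_le_self n (hw.le_of_mem h)

theorem insertPair (hw : IsStirlingWord 2 n w) (j : ℕ) :
    IsStirlingWord 2 (n + 1) (w.insertPair j (n + 1)) := by
  have hlt : ∀ x ∈ w, x < n + 1 := fun x hx => Nat.lt_succ_of_le (hw.le_of_mem hx)
  obtain ⟨hlen, hcount, havoid⟩ := isStirlingWord_iff.1 hw
  refine isStirlingWord_iff.2 ⟨?_, fun i hi₁ hi₂ => ?_, ?_⟩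
  · simp only [List.insertPair, List.length_append, List.length_take, List.length_cons,
      List.length_drop]
    omega
  · rw [List.count_insertPair]
    rcases hi₂.lt_or_eq with hi | rfl
    · rw [hcount i hi₁ (by omega), if_neg hi.ne]
    · rw [List.count_eq_zero.2 hw.succ_notMem, if_pos rfl]
  · rw [← List.take_append_drop j w] at havoid hlt
    exact havoid.append_cons_cons hlt

theorem exists_eq_insertPair (hw : IsStirlingWord 2 (n + 1) w) :
    ∃ j ≤ 2 * n, ∃ v, IsStirlingWord 2 n v ∧ v.insertPair j (n + 1) = w := by
  obtain ⟨hlen, hcount, havoid⟩ := isStirlingWord_iff.1 hw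
  obtain ⟨a, c, rfl⟩ := havoid.exists_eq_append_cons_cons (fun x hx => hw.le_of_mem hx)
    (hcount (n + 1) (by omega) le_rfl)
  simp only [List.length_append, List.length_cons] at hlen
  refine ⟨a.length, by omega, a ++ c, isStirlingWord_iff.2 ⟨?_, fun i hi₁ hi₂ => ?_, ?_⟩, ?_⟩
  · simp only [List.length_append]
    omega
  · simpa [List.count_append, List.count_cons, show n + 1 ≠ i by omega] using
      hcount i hi₁ (by omega)
  · exact havoid.sublist (by simp)
  · simp [List.insertPair]

end IsStirlingWord

end

theorem card_isStirlingWord_zero : Nat.card {w // IsStirlingWord 2 0 w} = 1 := by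
  have h (w : List ℕ) : IsStirlingWord 2 0 w ↔ w = [] := by
    constructor
    · exact fun hw => List.eq_nil_of_length_eq_zero hw.1
    · rintro rfl
      exact ⟨rfl, fun i hi₁ hi₂ => by omega, fun p q r _ _ hr => by simp at hr⟩
  simp only [h]
  exact Nat.card_unique

theorem card_isStirlingWord_succ (n : ℕ) :
    Nat.card {w // IsStirlingWord 2 (n + 1) w} =
      (2 * n + 1) * Nat.card {w // IsStirlingWord 2 n w} := by
  let f : Fin (2 * n + 1) × {w // IsStirlingWord 2 n w} → {w // IsStirlingWord 2 (n + 1) w} :=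
    fun x => ⟨x.2.1.insertPair x.1 (n + 1), x.2.2.insertPair x.1⟩
  have hf : f.Bijective := by
    refine ⟨?_, ?_⟩
    · rintro ⟨j₁, w₁, hw₁⟩ ⟨j₂, w₂, hw₂⟩ h
      obtain ⟨hj, rfl⟩ := List.insertPair_inj hw₁.succ_notMem hw₂.succ_notMem
        (by rw [hw₁.1]; omega) (by rw [hw₂.1]; omega) (congrArg Subtype.val h)
      exact Prod.ext (Fin.ext hj) rfl
    · rintro ⟨w, hw⟩
      obtain ⟨j, hj, v, hv, rfl⟩ := hw.exists_eq_insertPair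
      exact ⟨(⟨j, by omega⟩, ⟨v, hv⟩), rfl⟩
  rw [← Nat.card_eq_of_bijective f hf, Nat.card_prod, Nat.card_eq_fintype_card, Fintype.card_fin]

theorem card_isStirlingWord_two (n : ℕ) :
    Nat.card {w // IsStirlingWord 2 n w} = ∏ i ∈ Finset.range n, (2 * i + 1) := by
  induction n with
  | zero => exact card_isStirlingWord_zero
  | succ n ih => rw [card_isStirlingWord_succ, ih, Finset.prod_range_succ, mul_comm]

theorem two_stirling_count_general (n : ℕ) :
    Nat.card {w : List ℕ // IsStirlingWord 2 n w} =
      ∏ i ∈ Finset.Icc 1 (n - 1), (2 * i + 1) := by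
  rw [card_isStirlingWord_two]
  cases n with
  | zero => rfl
  | succ n =>
    rw [Finset.prod_range_eq_mul_Ico _ (by omega), Finset.Ico_add_one_right_eq_Icc,
      Nat.add_sub_cancel, mul_zero, zero_add, one_mul]

/-- The number of 2-Stirling permutations of size `n` is `(2n-1)!! = ∏_{i=1}^{n-1}(2i+1)`. -/
theorem two_stirling_count (n : ℕ) (hn : 1 ≤ n) :
    Nat.card {w : List ℕ // IsStirlingWord 2 n w} =
      ∏ i ∈ Finset.Icc 1 (n - 1), (2 * i + 1) :=
  two_stirling_count_general n
end

section
/- If each entry of a k-Stirling permutation σ of size n is assigned its local type in {0,1}^{k+1}, then the total number of 1's among all local types of σ equals n - 1. -/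
/-- The value `σ_p` of the 1-indexed word `w` with boundary convention
`σ_0 = σ_{kn+1} = -∞` (represented by `0`, which is smaller than every letter). -/
def bval (w : List ℕ) (p : ℕ) : ℕ :=
  if p = 0 then 0 else w.getD (p - 1) 0

/-- The increasing list `j_{i,1} < ⋯ < j_{i,k}` of (1-indexed) positions of letter `i`. -/
def stirPos (k n : ℕ) (w : List ℕ) (i : ℕ) : List ℕ :=
  ((List.range (k * n)).filter fun p => w.getD p 0 = i).map (· + 1)

/-- The local type `L_i(σ) = ℓ_{i,1}⋯ℓ_{i,k+1} ∈ {0,1}^{k+1}` of the letter `i`: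
`ℓ_{i,1} = 1` iff `σ_{j_{i,1}-1} > σ_{j_{i,1}}`, `ℓ_{i,k+1} = 1` iff
`σ_{j_{i,k}} < σ_{j_{i,k}+1}`, and `ℓ_{i,h} = 1` iff `σ_{j_{i,h}-1} ≠ σ_{j_{i,h}}`
for `2 ≤ h ≤ k`. -/
def localType (k n : ℕ) (w : List ℕ) (i : ℕ) : Fin (k + 1) → Bool := fun h =>
  let J := stirPos k n w i
  if (h : ℕ) = 0 then decide (i < bval w (J.getD 0 0 - 1))
  else if (h : ℕ) = k then decide (i < bval w (J.getD (k - 1) 0 + 1))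
  else decide (bval w (J.getD (h : ℕ) 0 - 1) ≠ i)

/-! Double counting over the `kn + 1` gaps of `σ_0 σ_1 ⋯ σ_{kn+1}`, each gap being given the larger
of its two neighbouring letters. Entry `h` of the local type of `i` inspects one gap next to an
occurrence of `i`, and the Stirling condition (letters between two copies of `i` are `≥ i`) shows
that the entry is `0` exactly when this gap is given to `i`, and that every gap given to `i` arises
this way. So `L_i` has as many zeros as there are gaps given to `i`, and summing over `i` the local
types contain `(k + 1) n - (k n + 1) = n - 1` ones. -/

theorem List.map_getD_range (l : List ℕ) : (List.range l.length).map (fun p => l.getD p 0) = l :=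
  List.ext_getElem (by simp) (fun p _ hp => by simp [hp])

@[simp]
theorem bval_zero (w : List ℕ) : bval w 0 = 0 := rfl

theorem bval_of_length_lt {w : List ℕ} {p : ℕ} (hp : w.length < p) : bval w p = 0 := by
  rw [bval, if_neg (by omega)]
  exact List.getD_eq_default _ _ (by omega)

theorem bval_mem {w : List ℕ} {p : ℕ} (h₁ : 1 ≤ p) (h₂ : p ≤ w.length) : bval w p ∈ w := by
  rw [bval, if_neg (by omega), List.getD_eq_getElem _ _ (by omega)]
  exact List.getElem_mem _

theorem mem_stirPos {k n : ℕ} {w : List ℕ} {i p : ℕ} :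
    p ∈ stirPos k n w i ↔ 1 ≤ p ∧ p ≤ k * n ∧ bval w p = i := by
  simp only [stirPos, List.mem_map, List.mem_filter, List.mem_range, decide_eq_true_eq]
  constructor
  · rintro ⟨q, ⟨hq, rfl⟩, rfl⟩
    exact ⟨by omega, by omega, by simp [bval]⟩
  · rintro ⟨h₁, h₂, rfl⟩
    exact ⟨p - 1, ⟨by omega, by rw [bval, if_neg (by omega)]⟩, by omega⟩

theorem stirPos_pairwise (k n : ℕ) (w : List ℕ) (i : ℕ) : (stirPos k n w i).Pairwise (· < ·) :=
  (List.pairwise_lt_range.filter _).map _ fun _ _ h => Nat.add_lt_add_right h 1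

/-- Gap `g` sits between `σ_g` and `σ_{g+1}` (so the gaps of `σ` are `0, …, kn`). -/
def gapLetter (w : List ℕ) (g : ℕ) : ℕ := max (bval w g) (bval w (g + 1))

/-- The gap read by entry `h` of the local type of `i`: the gap before the `(h+1)`-st occurrence
of `i` when `h < k`, the gap after its last occurrence when `h = k`. -/
def slotGap (k n : ℕ) (w : List ℕ) (i h : ℕ) : ℕ :=
  if h < k then (stirPos k n w i).getD h 0 - 1 else (stirPos k n w i).getD (k - 1) 0

namespace IsStirlingWord

variable {k n : ℕ} {w : List ℕ} {i : ℕ}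

theorem mem_Icc (hw : IsStirlingWord k n w) {x : ℕ} (hx : x ∈ w) : x ∈ Finset.Icc 1 n := by
  have hcount : w.countP (· ∈ Finset.Icc 1 n) = w.length :=
    calc w.countP (· ∈ Finset.Icc 1 n)
        = ∑ a ∈ w.toFinset with a ∈ Finset.Icc 1 n, w.count a :=
          (Finset.sum_filter_count_eq_countP _ _).symm
      _ = ∑ a ∈ Finset.Icc 1 n, w.count a :=
          Finset.sum_subset (fun a ha => (Finset.mem_filter.1 ha).2) fun a ha ha' =>
            List.count_eq_zero.2 fun haw => ha' (Finset.mem_filter.2 ⟨List.mem_toFinset.2 haw, ha⟩)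
      _ = w.length := by
          rw [Finset.sum_congr rfl fun a ha => hw.2.1 a (Finset.mem_Icc.1 ha).1 (Finset.mem_Icc.1 ha).2,
            Finset.sum_const, Nat.card_Icc, smul_eq_mul, hw.1, Nat.add_sub_cancel, mul_comm]
  simpa using List.countP_eq_length.1 hcount x hx

theorem bval_mem_Icc (hw : IsStirlingWord k n w) {p : ℕ} (h₁ : 1 ≤ p) (h₂ : p ≤ k * n) :
    bval w p ∈ Finset.Icc 1 n :=
  hw.mem_Icc (bval_mem h₁ (hw.1 ▸ h₂))

theorem bval_le (hw : IsStirlingWord k n w) (p : ℕ) : bval w p ≤ n := by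
  by_cases hp : 1 ≤ p ∧ p ≤ k * n
  · exact (Finset.mem_Icc.1 (hw.bval_mem_Icc hp.1 hp.2)).2
  · rcases Nat.eq_zero_or_pos p with rfl | _
    · simp
    · rw [bval_of_length_lt (by rw [hw.1]; omega)]; omega

theorem bval_pos_iff (hw : IsStirlingWord k n w) {p : ℕ} : 0 < bval w p ↔ 1 ≤ p ∧ p ≤ k * n := by
  constructor
  · intro h
    refine ⟨Nat.pos_of_ne_zero fun hp => by simp [hp] at h, not_lt.1 fun hp => ?_⟩
    rw [bval_of_length_lt (hw.1 ▸ hp)] at h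
    exact h.false
  · exact fun hp => (Finset.mem_Icc.1 (hw.bval_mem_Icc hp.1 hp.2)).1

theorem le_bval_of_lt_of_lt (hw : IsStirlingWord k n w) {p q r : ℕ} (hi : 1 ≤ i)
    (hp : bval w p = i) (hr : bval w r = i) (hpq : p < q) (hqr : q < r) : i ≤ bval w q := by
  obtain ⟨hp₁, -⟩ := hw.bval_pos_iff.1 (hp ▸ hi)
  obtain ⟨-, hr₂⟩ := hw.bval_pos_iff.1 (hr ▸ hi)
  simp only [bval, if_neg (show p ≠ 0 by omega), if_neg (show q ≠ 0 by omega),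
    if_neg (show r ≠ 0 by omega)] at hp hr ⊢
  exact hp ▸ hw.2.2 _ _ _ (by omega) (by omega) (by rw [hw.1]; omega) (hp.trans hr.symm)

theorem mem_stirPos_iff (hw : IsStirlingWord k n w) {p : ℕ} (hi : 1 ≤ i) :
    p ∈ stirPos k n w i ↔ bval w p = i := by
  rw [mem_stirPos, ← and_assoc, ← hw.bval_pos_iff]
  exact ⟨fun h => h.2, fun h => ⟨h ▸ hi, h⟩⟩

theorem length_stirPos (hw : IsStirlingWord k n w) (hi : i ∈ Finset.Icc 1 n) :
    (stirPos k n w i).length = k := by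
  obtain ⟨hi₁, hi₂⟩ := Finset.mem_Icc.1 hi
  rw [stirPos, List.length_map, ← hw.1, ← List.countP_eq_length_filter, ← hw.2.1 i hi₁ hi₂]
  conv_rhs => rw [← List.map_getD_range w]
  rw [List.count, List.countP_map]
  rfl

theorem getD_stirPos_lt_getD (hw : IsStirlingWord k n w) (hi : i ∈ Finset.Icc 1 n) {a b : ℕ}
    (hab : a < b) (hb : b < k) : (stirPos k n w i).getD a 0 < (stirPos k n w i).getD b 0 := by
  have hlen := hw.length_stirPos hi
  rw [List.getD_eq_getElem _ _ (by omega), List.getD_eq_getElem _ _ (by omega)]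
  exact List.pairwise_iff_getElem.1 (stirPos_pairwise k n w i) a b _ _ hab

theorem getD_stirPos_le_getD (hw : IsStirlingWord k n w) (hi : i ∈ Finset.Icc 1 n) {a b : ℕ}
    (hab : a ≤ b) (hb : b < k) : (stirPos k n w i).getD a 0 ≤ (stirPos k n w i).getD b 0 := by
  obtain rfl | hab := hab.eq_or_lt
  · rfl
  · exact (hw.getD_stirPos_lt_getD hi hab hb).le

theorem bval_getD_stirPos (hw : IsStirlingWord k n w) (hi : i ∈ Finset.Icc 1 n) {m : ℕ}
    (hm : m < k) : bval w ((stirPos k n w i).getD m 0) = i := by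
  have hm' : m < (stirPos k n w i).length := by rwa [hw.length_stirPos hi]
  rw [← hw.mem_stirPos_iff (Finset.mem_Icc.1 hi).1, List.getD_eq_getElem _ _ hm']
  exact List.getElem_mem hm'

theorem exists_getD_stirPos_eq (hw : IsStirlingWord k n w) (hi : i ∈ Finset.Icc 1 n) {p : ℕ}
    (hp : bval w p = i) : ∃ m < k, (stirPos k n w i).getD m 0 = p := by
  obtain ⟨m, hm, rfl⟩ := List.getElem_of_mem ((hw.mem_stirPos_iff (Finset.mem_Icc.1 hi).1).2 hp)
  exact ⟨m, by rwa [hw.length_stirPos hi] at hm, List.getD_eq_getElem _ _ hm⟩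

theorem one_le_getD_stirPos (hw : IsStirlingWord k n w) (hi : i ∈ Finset.Icc 1 n) {m : ℕ}
    (hm : m < k) : 1 ≤ (stirPos k n w i).getD m 0 :=
  (hw.bval_pos_iff.1 ((hw.bval_getD_stirPos hi hm).symm ▸ (Finset.mem_Icc.1 hi).1)).1

theorem getD_stirPos_zero_le (hw : IsStirlingWord k n w) (hi : i ∈ Finset.Icc 1 n) {p : ℕ}
    (hp : bval w p = i) : (stirPos k n w i).getD 0 0 ≤ p := by
  obtain ⟨m, hm, rfl⟩ := hw.exists_getD_stirPos_eq hi hp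
  exact hw.getD_stirPos_le_getD hi (Nat.zero_le m) hm

theorem le_getD_stirPos_last (hw : IsStirlingWord k n w) (hi : i ∈ Finset.Icc 1 n) {p : ℕ}
    (hp : bval w p = i) : p ≤ (stirPos k n w i).getD (k - 1) 0 := by
  obtain ⟨m, hm, rfl⟩ := hw.exists_getD_stirPos_eq hi hp
  exact hw.getD_stirPos_le_getD hi (by omega) (by omega)

theorem le_bval_pred_getD_stirPos (hw : IsStirlingWord k n w) (hi : i ∈ Finset.Icc 1 n) {m : ℕ}
    (hm₀ : 0 < m) (hm : m < k) : i ≤ bval w ((stirPos k n w i).getD m 0 - 1) := by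
  have hprev := hw.getD_stirPos_lt_getD hi (Nat.sub_lt hm₀ one_pos) hm
  obtain heq | hlt := (Nat.le_sub_one_of_lt hprev).eq_or_lt
  · rw [← heq, hw.bval_getD_stirPos hi (by omega)]
  · exact hw.le_bval_of_lt_of_lt (Finset.mem_Icc.1 hi).1 (hw.bval_getD_stirPos hi (by omega))
      (hw.bval_getD_stirPos hi hm) hlt (by omega)

theorem le_mul_of_gapLetter_pos (hw : IsStirlingWord k n w) {g : ℕ} (hg : 0 < gapLetter w g) :
    g ≤ k * n := by
  rcases lt_max_iff.1 hg with h | h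
  · exact (hw.bval_pos_iff.1 h).2
  · have := (hw.bval_pos_iff.1 h).2; omega

theorem gapLetter_mem_Icc (hw : IsStirlingWord k n w) (hkn : 0 < k * n) {g : ℕ}
    (hg : g ≤ k * n) : gapLetter w g ∈ Finset.Icc 1 n := by
  have hpos : 0 < bval w g ∨ 0 < bval w (g + 1) := by
    rcases Nat.eq_zero_or_pos g with rfl | hg₀
    · exact Or.inr (hw.bval_pos_iff.2 ⟨le_rfl, hkn⟩)
    · exact Or.inl (hw.bval_pos_iff.2 ⟨hg₀, hg⟩)
  have := hw.bval_le g
  have := hw.bval_le (g + 1)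
  simp only [gapLetter, Finset.mem_Icc]
  omega

theorem localType_eq_false_iff (hw : IsStirlingWord k n w) (hk : 0 < k)
    (hi : i ∈ Finset.Icc 1 n) (h : Fin (k + 1)) :
    localType k n w i h = false ↔ gapLetter w (slotGap k n w i h) = i := by
  obtain ⟨h, hh⟩ := h
  simp only [localType, slotGap, gapLetter]
  rcases Nat.eq_zero_or_pos h with rfl | hh₀
  · have hfirst := hw.one_le_getD_stirPos hi hk
    have hbefore : bval w ((stirPos k n w i).getD 0 0 - 1) ≠ i := fun heq =>
      absurd (hw.getD_stirPos_zero_le hi heq) (by omega)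
    rw [if_pos rfl, if_pos hk, Nat.sub_add_cancel hfirst, hw.bval_getD_stirPos hi hk,
      decide_eq_false_iff_not]
    omega
  obtain hhk | hhk := (Nat.lt_succ_iff.1 hh).eq_or_lt
  · subst h
    have hafter : bval w ((stirPos k n w i).getD (k - 1) 0 + 1) ≠ i := fun heq =>
      absurd (hw.le_getD_stirPos_last hi heq) (by omega)
    rw [if_neg hh₀.ne', if_pos rfl, if_neg (lt_irrefl k), hw.bval_getD_stirPos hi (by omega),
      decide_eq_false_iff_not]
    omega
  · have hocc := hw.one_le_getD_stirPos hi hhk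
    have hbefore := hw.le_bval_pred_getD_stirPos hi hh₀ hhk
    rw [if_neg hh₀.ne', if_neg hhk.ne, if_pos hhk, Nat.sub_add_cancel hocc,
      hw.bval_getD_stirPos hi hhk, decide_eq_false_iff_not]
    omega

theorem slotGap_strictMono (hw : IsStirlingWord k n w) (hi : i ∈ Finset.Icc 1 n) :
    StrictMono fun h : Fin (k + 1) => slotGap k n w i h := by
  intro a b hab
  have ha : (a : ℕ) < k := by omega
  have hocc := hw.one_le_getD_stirPos hi ha
  simp only [slotGap, if_pos ha]
  split_ifs with hb
  · have := hw.getD_stirPos_lt_getD hi hab hb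
    omega
  · have := hw.getD_stirPos_le_getD hi (Nat.le_sub_one_of_lt ha) (by omega)
    omega

theorem exists_slotGap_eq (hw : IsStirlingWord k n w) (hk : 0 < k) (hi : i ∈ Finset.Icc 1 n)
    {g : ℕ} (hg : gapLetter w g = i) : ∃ h : Fin (k + 1), slotGap k n w i h = g := by
  have hi₁ := (Finset.mem_Icc.1 hi).1
  simp only [gapLetter] at hg
  rcases lt_or_ge (bval w g) (bval w (g + 1)) with hasc | hdesc
  · -- an ascent into `i` can only precede its first occurrence
    obtain ⟨m, hm, hgm⟩ := hw.exists_getD_stirPos_eq hi (show bval w (g + 1) = i by omega)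
    rcases Nat.eq_zero_or_pos m with rfl | hm₀
    · exact ⟨⟨0, by omega⟩, by simp only [slotGap, if_pos hk, hgm, Nat.add_sub_cancel]⟩
    · have := hw.le_bval_pred_getD_stirPos hi hm₀ hm
      rw [hgm, Nat.add_sub_cancel] at this
      omega
  have hgi : bval w g = i := by omega
  obtain ⟨m, hm, hgm⟩ := hw.exists_getD_stirPos_eq hi hgi
  by_cases hnext : bval w (g + 1) = i
  · obtain ⟨m', hm', hgm'⟩ := hw.exists_getD_stirPos_eq hi hnext
    have := hw.getD_stirPos_zero_le hi hgi
    have hm'₀ : m' ≠ 0 := by rintro rfl; omega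
    exact ⟨⟨m', by omega⟩, by simp only [slotGap, if_pos hm', hgm', Nat.add_sub_cancel]⟩
  -- a strict descent from `i` can only follow its last occurrence
  obtain hlast | hm' := (Nat.le_sub_one_of_lt hm).eq_or_lt
  · exact ⟨⟨k, by omega⟩, by simp only [slotGap, lt_irrefl, if_false, ← hlast, hgm]⟩
  · have hm₁ : m + 1 < k := by omega
    have hnextocc := hw.getD_stirPos_lt_getD hi m.lt_add_one hm₁
    have hnexti := hw.bval_getD_stirPos hi hm₁
    have hne : g + 1 ≠ (stirPos k n w i).getD (m + 1) 0 := fun h => hnext (h ▸ hnexti)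
    have := hw.le_bval_of_lt_of_lt hi₁ hgi hnexti g.lt_add_one (by omega)
    omega

theorem card_localType_eq_false (hw : IsStirlingWord k n w) (hk : 0 < k)
    (hi : i ∈ Finset.Icc 1 n) :
    (Finset.univ.filter fun h : Fin (k + 1) => localType k n w i h = false).card =
      ((Finset.range (k * n + 1)).filter fun g => gapLetter w g = i).card := by
  have hi₁ := (Finset.mem_Icc.1 hi).1
  refine Finset.card_nbij (fun h => slotGap k n w i h) (fun h hh => ?_)
    (hw.slotGap_strictMono hi).injective.injOn (fun g hg => ?_)
  · have hgap := (hw.localType_eq_false_iff hk hi h).1 (Finset.mem_filter.1 hh).2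
    simp only [Finset.coe_filter, Set.mem_ofPred_eq, Finset.mem_range]
    exact ⟨Nat.lt_succ_of_le (hw.le_mul_of_gapLetter_pos (by omega)), hgap⟩
  · obtain ⟨h, rfl⟩ := hw.exists_slotGap_eq hk hi (Finset.mem_filter.1 hg).2
    exact ⟨h, Finset.mem_filter.2 ⟨Finset.mem_univ h,
      (hw.localType_eq_false_iff hk hi h).2 (Finset.mem_filter.1 hg).2⟩, rfl⟩

theorem sum_localType_add_card_gapLetter (hw : IsStirlingWord k n w) (hk : 0 < k)
    (hi : i ∈ Finset.Icc 1 n) :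
    (∑ h : Fin (k + 1), if localType k n w i h then 1 else 0) +
      ((Finset.range (k * n + 1)).filter fun g => gapLetter w g = i).card = k + 1 := by
  rw [Finset.sum_boole, ← hw.card_localType_eq_false hk hi, Nat.cast_id]
  simpa using Finset.card_filter_add_card_filter_not (s := Finset.univ)
    (fun h : Fin (k + 1) => localType k n w i h = true)

end IsStirlingWord

theorem local_types_ones_general (k n : ℕ) (hk : 1 ≤ k) (w : List ℕ)
    (hw : IsStirlingWord k n w) :
    (∑ i ∈ Finset.Icc 1 n, ∑ h : Fin (k + 1),
        (if localType k n w i h then 1 else 0)) = n - 1 := by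
  obtain rfl | hn := Nat.eq_zero_or_pos n
  · simp
  have hgaps : ∑ i ∈ Finset.Icc 1 n,
      ((Finset.range (k * n + 1)).filter fun g => gapLetter w g = i).card = k * n + 1 := by
    rw [← Finset.card_eq_sum_card_fiberwise fun g hg =>
      hw.gapLetter_mem_Icc (Nat.mul_pos hk hn)
        (Nat.lt_succ_iff.1 (Finset.mem_range.1 hg)), Finset.card_range]
  have htotal := Finset.sum_congr rfl fun i hi => hw.sum_localType_add_card_gapLetter hk hi
  rw [Finset.sum_add_distrib, hgaps, Finset.sum_const, Nat.card_Icc, smul_eq_mul] at htotal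
  have hmul : (n + 1 - 1) * (k + 1) = k * n + n := by rw [Nat.add_sub_cancel]; ring
  omega

/-- The total number of `1`s among all local types of a `k`-Stirling permutation of
size `n` equals `n - 1`. -/
theorem local_types_ones (k n : ℕ) (hk : 1 ≤ k) (hn : 1 ≤ n) (w : List ℕ)
    (hw : IsStirlingWord k n w) :
    (∑ i ∈ Finset.Icc 1 n, ∑ h : Fin (k + 1),
        (if localType k n w i h then 1 else 0)) = n - 1 :=
  local_types_ones_general k n hk w hw
end
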